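/- Set b := min_{1≤i≤N} b_i, B := max_{1≤i≤N} b_i, r := min_{1≤i≤N−1} (r_{i+1} − r_i), and μ := min{ b·r^{N−1} / (4D(2r_N)^{N−1} + 4NB(2r_N)^{N−2} + 1), r/4, r_1/4 }. Then |P_N(λ)| ≥ b·r^{N−1}/2 > 0 for every λ in the union of the intervals [−r_j − μ, −r_j + μ], 1 ≤ j ≤ N; consequently, if a_1 > a_2 > ⋯ > a_N are the N real roots of P_N, then |a_i − a_j| ≥ 2μ for all 1 ≤ i < j ≤ N. -/

import Mathlib

/-!
Near the pole `-r j` the term `b j * ∏ k ≠ j, (λ + r k)` of `P_N` dominates. At `λ = -r j` the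
product has modulus at least `rm ^ (N - 1)`, the `r k` being `rm`-separated, and on the interval
it moves by at most `(N - 1) μ M ^ (N - 2)` with `M = 2 r_N`; every other term of `P_N` carries
the factor `λ + r j`, of size at most `μ`. The choice of `μ` keeps the total error below half of
the main term.

The values `P_N(-r j) = -b j * ∏ k ≠ j, (r k - r j)` alternate in sign and `P_N` is positive far
to the right, so each gap `(-r_j, -r_{j-1})`, and `(-r_1, ∞)`, contains a root. There are only
`N` roots, so `a j` is the root in the `j`-th gap. For `i < j` this puts `a i` above `-r i + μ`
and `a j` below `-r i - μ`.
-/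

open Polynomial Finset

lemma abs_prod_le_pow_card {ι : Type*} (s : Finset ι) {f : ι → ℝ} {M : ℝ}
    (hf : ∀ i ∈ s, |f i| ≤ M) : |∏ i ∈ s, f i| ≤ M ^ #s := by
  rw [abs_prod, ← prod_const]
  exact prod_le_prod (fun i _ => abs_nonneg _) hf

lemma abs_prod_sub_prod_le {ι : Type*} [DecidableEq ι] (s : Finset ι) {u v : ι → ℝ}
    {M ε : ℝ} (hu : ∀ i ∈ s, |u i| ≤ M) (hv : ∀ i ∈ s, |v i| ≤ M)
    (huv : ∀ i ∈ s, |u i - v i| ≤ ε) :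
    |∏ i ∈ s, u i - ∏ i ∈ s, v i| ≤ #s * ε * M ^ (#s - 1) := by
  induction s using Finset.induction_on with
  | empty => simp
  | insert a s ha ih =>
    simp only [forall_mem_insert] at hu hv huv
    have hM : 0 ≤ M := (abs_nonneg _).trans hu.1
    have hε : 0 ≤ ε := (abs_nonneg _).trans huv.1
    have hpow : (#s : ℝ) * (M * M ^ (#s - 1)) = #s * M ^ #s := by
      rcases Nat.eq_zero_or_pos #s with h | h
      · simp [h]
      · rw [mul_pow_sub_one h.ne']
    rw [prod_insert ha, prod_insert ha, card_insert_of_notMem ha, Nat.add_sub_cancel,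
      Nat.cast_succ]
    calc |u a * ∏ i ∈ s, u i - v a * ∏ i ∈ s, v i|
        = |u a * (∏ i ∈ s, u i - ∏ i ∈ s, v i) + (u a - v a) * ∏ i ∈ s, v i| := by
          congr 1; ring
      _ ≤ M * (#s * ε * M ^ (#s - 1)) + ε * M ^ #s := by
          refine (abs_add_le _ _).trans (add_le_add ?_ ?_) <;> rw [abs_mul]
          · exact mul_le_mul hu.1 (ih hu.2 hv.2 huv.2) (abs_nonneg _) hM
          · exact mul_le_mul huv.1 (abs_prod_le_pow_card s hv.2) (abs_nonneg _) hε
      _ = (#s + 1) * ε * M ^ #s := by linear_combination ε * hpow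

lemma exists_eq_zero_of_mul_neg {f : ℝ → ℝ} {a b : ℝ} (hab : a ≤ b)
    (hf : ContinuousOn f (Set.Icc a b)) (h : f a * f b < 0) : ∃ x ∈ Set.Ioo a b, f x = 0 := by
  rcases lt_or_gt_of_ne (left_ne_zero_of_mul h.ne) with ha | ha
  · exact intermediate_value_Ioo hab hf ⟨ha, pos_of_mul_neg_right h ha.le⟩
  · exact intermediate_value_Ioo' hab hf ⟨neg_of_mul_neg_right h ha.le, ha⟩

lemma StrictAnti.eq_of_forall_mem_range {α : Type*} [LinearOrder α] {n : ℕ} {f g : Fin n → α}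
    (hf : StrictAnti f) (hg : StrictAnti g) (h : ∀ m, f m ∈ Set.range g) : f = g := by
  choose σ hσ using h
  have hσ_mono : StrictMono σ := fun m₁ m₂ h₁₂ => by
    have := hf h₁₂
    rwa [← hσ, ← hσ, hg.lt_iff_gt] at this
  have hσ_id : σ = id := (hσ_mono.range_inj strictMono_id).1 <| by
    rw [Set.range_id, Set.range_eq_univ]
    exact Finite.surjective_of_injective hσ_mono.injective
  funext m
  rw [← hσ, hσ_id, id]

lemma neg_one_pow_mul_prod_erase_sub_pos {n : ℕ} {r : Fin n → ℝ} (hr : StrictMono r)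
    (m : Fin n) : 0 < (-1) ^ (m : ℕ) * ∏ k ∈ univ.erase m, (r k - r m) := by
  have hsplit : univ.erase m = Iio m ∪ Ioi m := by
    ext k
    simp only [mem_erase, mem_univ, and_true, mem_union, mem_Iio, mem_Ioi]
    exact ne_iff_lt_or_gt
  have hbelow : ∏ k ∈ Iio m, (r k - r m) = (-1) ^ (m : ℕ) * ∏ k ∈ Iio m, (r m - r k) := by
    rw [← Fin.card_Iio m, ← prod_const, ← prod_mul_distrib]
    exact prod_congr rfl fun _ _ => by ring
  have hsq : ((-1 : ℝ) ^ (m : ℕ)) * (-1) ^ (m : ℕ) = 1 := by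
    rw [← mul_pow]; norm_num
  have hdisj : Disjoint (Iio m) (Ioi m) :=
    disjoint_left.2 fun k h₁ h₂ => lt_asymm (mem_Iio.1 h₁) (mem_Ioi.1 h₂)
  rw [hsplit, prod_union hdisj, hbelow, ← mul_assoc, ← mul_assoc, hsq, one_mul]
  exact mul_pos (prod_pos fun k hk => sub_pos.2 (hr (mem_Iio.1 hk)))
    (prod_pos fun k hk => sub_pos.2 (hr (mem_Ioi.1 hk)))

lemma le_abs_sub_of_forall_le_succ_sub {n : ℕ} {r : Fin n → ℝ} (hr : Monotone r) {δ : ℝ}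
    (h : ∀ i : Fin n, ∀ h : (i : ℕ) + 1 < n, δ ≤ r ⟨(i : ℕ) + 1, h⟩ - r i)
    {j k : Fin n} (hkj : k ≠ j) : δ ≤ |r k - r j| := by
  have hlt : ∀ p q : Fin n, p < q → δ ≤ r q - r p := fun p q hpq => by
    have hp : (p : ℕ) + 1 < n := by omega
    have := hr (show (⟨(p : ℕ) + 1, hp⟩ : Fin n) ≤ q from Fin.le_def.2 hpq)
    linarith [h p hp]
  rcases lt_or_gt_of_ne hkj with hkj | hjk
  · exact (hlt k j hkj).trans (abs_sub_comm (r k) (r j) ▸ le_abs_self _)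
  · exact (hlt j k hjk).trans (le_abs_self _)

section SecularPoly

variable {ι : Type*} [Fintype ι] [DecidableEq ι] {D : ℝ} {b r : ι → ℝ}

noncomputable def secularPoly (D : ℝ) (b r : ι → ℝ) : ℝ[X] :=
  C D * ∏ j, (X + C (r j)) - ∑ i, C (b i) * ∏ j ∈ univ.erase i, (X + C (r j))

lemma eval_secularPoly (x : ℝ) : (secularPoly D b r).eval x =
    D * ∏ k, (x + r k) - ∑ i, b i * ∏ k ∈ univ.erase i, (x + r k) := by
  simp [secularPoly, eval_prod, eval_finsetSum]

lemma eval_secularPoly_neg (j : ι) :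
    (secularPoly D b r).eval (-r j) = -(b j * ∏ k ∈ univ.erase j, (r k - r j)) := by
  rw [eval_secularPoly, prod_eq_zero (mem_univ j) (neg_add_cancel _), mul_zero, zero_sub,
    sum_eq_single j]
  · simp_rw [neg_add_eq_sub]
  · intro i _ hij
    rw [prod_eq_zero (mem_erase.2 ⟨hij.symm, mem_univ j⟩) (neg_add_cancel _), mul_zero]
  · simp

lemma eval_secularPoly_pos {x : ℝ} (hx : 0 < x) (hr : ∀ k, 0 ≤ r k) (hb : ∀ i, 0 ≤ b i)
    (hD : ∑ i, b i < D * x) : 0 < (secularPoly D b r).eval x := by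
  have hA : 0 < ∏ k, (x + r k) := prod_pos fun k _ => by linarith [hr k]
  have hterm : ∀ i ∈ univ,
      b i * (∏ k ∈ univ.erase i, (x + r k)) * x ≤ b i * ∏ k, (x + r k) := by
    intro i _
    rw [← mul_prod_erase univ (fun k => x + r k) (mem_univ i), mul_assoc, mul_comm _ x]
    have : 0 ≤ ∏ k ∈ univ.erase i, (x + r k) := prod_nonneg fun k _ => by linarith [hr k]
    have := hb i
    gcongr
    linarith [hr i]
  have hsum : (∑ i, b i * ∏ k ∈ univ.erase i, (x + r k)) * x < (D * ∏ k, (x + r k)) * x :=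
    calc (∑ i, b i * ∏ k ∈ univ.erase i, (x + r k)) * x
        ≤ (∑ i, b i) * ∏ k, (x + r k) := by
          rw [sum_mul, sum_mul]; exact sum_le_sum hterm
      _ < (D * x) * ∏ k, (x + r k) := mul_lt_mul_of_pos_right hD hA
      _ = (D * ∏ k, (x + r k)) * x := by ring
  rw [eval_secularPoly, sub_pos]
  exact lt_of_mul_lt_mul_right hsum hx.le

lemma abs_eval_secularPoly_add_le (hD : 0 ≤ D) (hb : ∀ i, 0 ≤ b i) {B M x : ℝ}
    (hB : ∀ i, b i ≤ B) (hM : ∀ k, |x + r k| ≤ M) (j : ι) :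
    |(secularPoly D b r).eval x + b j * ∏ k ∈ univ.erase j, (x + r k)| ≤
      |x + r j| * (D * M ^ (Fintype.card ι - 1) +
        (Fintype.card ι - 1 : ℕ) * B * M ^ (Fintype.card ι - 2)) := by
  have hcard : #(univ.erase j) = Fintype.card ι - 1 := by
    rw [card_erase_of_mem (mem_univ j), card_univ]
  have hterm : ∀ i ∈ univ.erase j,
      |b i * ∏ k ∈ univ.erase i, (x + r k)| ≤
        B * (|x + r j| * M ^ (Fintype.card ι - 2)) := by
    intro i hi
    have hj : j ∈ univ.erase i := mem_erase.2 ⟨(ne_of_mem_erase hi).symm, mem_univ j⟩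
    have hrest := abs_prod_le_pow_card ((univ.erase i).erase j) (fun k _ => hM k)
    rw [card_erase_of_mem hj, card_erase_of_mem (mem_univ i), card_univ, Nat.sub_sub] at hrest
    rw [← mul_prod_erase _ _ hj, abs_mul, abs_mul, abs_of_nonneg (hb i)]
    exact mul_le_mul (hB i) (mul_le_mul_of_nonneg_left hrest (abs_nonneg _))
      (by positivity) ((hb i).trans (hB i))
  calc _ = |D * ((x + r j) * ∏ k ∈ univ.erase j, (x + r k)) -
        ∑ i ∈ univ.erase j, b i * ∏ k ∈ univ.erase i, (x + r k)| := by
        rw [eval_secularPoly, ← mul_prod_erase univ (fun k => x + r k) (mem_univ j),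
          ← add_sum_erase _ _ (mem_univ j)]
        congr 1; ring
    _ ≤ D * (|x + r j| * M ^ (Fintype.card ι - 1)) +
        ∑ i ∈ univ.erase j, B * (|x + r j| * M ^ (Fintype.card ι - 2)) := by
        refine (abs_sub _ _).trans
          (add_le_add ?_ ((abs_sum_le_sum_abs _ _).trans (sum_le_sum hterm)))
        rw [abs_mul, abs_mul, abs_of_nonneg hD, ← hcard]
        gcongr
        exact abs_prod_le_pow_card _ fun k _ => hM k
    _ = _ := by rw [sum_const, hcard, nsmul_eq_mul]; ring

lemma sub_le_abs_prod_erase {δ M x : ℝ} (j : ι) (hgap : ∀ k ≠ j, δ ≤ |r k - r j|)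
    (hδ : 0 ≤ δ) (hM : ∀ k, |x + r k| ≤ M) (hM' : ∀ k, |r k - r j| ≤ M) :
    δ ^ (Fintype.card ι - 1) -
        (Fintype.card ι - 1 : ℕ) * |x + r j| * M ^ (Fintype.card ι - 2) ≤
      |∏ k ∈ univ.erase j, (x + r k)| := by
  have hcard : #(univ.erase j) = Fintype.card ι - 1 := by
    rw [card_erase_of_mem (mem_univ j), card_univ]
  have hpole : δ ^ (Fintype.card ι - 1) ≤ |∏ k ∈ univ.erase j, (r k - r j)| := by
    rw [abs_prod, ← hcard, ← prod_const]
    exact prod_le_prod (fun _ _ => hδ) fun k hk => hgap k (ne_of_mem_erase hk)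
  have hdiff := abs_prod_sub_prod_le (univ.erase j) (ε := |x + r j|) (fun k _ => hM k)
    (fun k _ => hM' k) (fun k _ => (congrArg abs (by ring)).le)
  rw [hcard, Nat.sub_sub, abs_sub_comm] at hdiff
  linarith [abs_sub_abs_le_abs_sub (∏ k ∈ univ.erase j, (r k - r j))
    (∏ k ∈ univ.erase j, (x + r k))]

lemma sub_mul_le_abs_eval_secularPoly {bm B δ M x : ℝ} (j : ι) (hD : 0 ≤ D) (hbm : 0 ≤ bm)
    (hbm_le : ∀ i, bm ≤ b i) (hB : ∀ i, b i ≤ B) (hgap : ∀ k ≠ j, δ ≤ |r k - r j|)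
    (hδ : 0 ≤ δ) (hM : ∀ k, |x + r k| ≤ M) (hM' : ∀ k, |r k - r j| ≤ M) :
    bm * δ ^ (Fintype.card ι - 1) - |x + r j| *
      (bm * (Fintype.card ι - 1 : ℕ) * M ^ (Fintype.card ι - 2) +
        D * M ^ (Fintype.card ι - 1) +
        (Fintype.card ι - 1 : ℕ) * B * M ^ (Fintype.card ι - 2)) ≤
      |(secularPoly D b r).eval x| := by
  have hb : ∀ i, 0 ≤ b i := fun i => hbm.trans (hbm_le i)
  have hmain : bm * (δ ^ (Fintype.card ι - 1) -
      (Fintype.card ι - 1 : ℕ) * |x + r j| * M ^ (Fintype.card ι - 2)) ≤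
      |b j * ∏ k ∈ univ.erase j, (x + r k)| := by
    rw [abs_mul, abs_of_nonneg (hb j)]
    exact (mul_le_mul_of_nonneg_left (sub_le_abs_prod_erase j hgap hδ hM hM') hbm).trans
      (mul_le_mul_of_nonneg_right (hbm_le j) (abs_nonneg _))
  have herr := abs_eval_secularPoly_add_le hD hb hB hM j
  have htri := abs_sub_abs_le_abs_sub (b j * ∏ k ∈ univ.erase j, (x + r k))
    ((secularPoly D b r).eval x + b j * ∏ k ∈ univ.erase j, (x + r k))
  rw [show ∀ u v : ℝ, v - (u + v) = -u by intros; ring, abs_neg] at htri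
  linarith

lemma le_abs_eval_secularPoly {bm B δ M μ x : ℝ} (j : ι) (hD : 0 ≤ D) (hbm : 0 ≤ bm)
    (hbm_le : ∀ i, bm ≤ b i) (hB : ∀ i, b i ≤ B) (hgap : ∀ k ≠ j, δ ≤ |r k - r j|)
    (hδ : 0 ≤ δ) (hr : ∀ k, 4 * μ ≤ r k ∧ 2 * r k ≤ M) (hx : |x + r j| ≤ μ)
    (hμ : μ * (4 * D * M ^ (Fintype.card ι - 1) + 4 * Fintype.card ι * B *
      M ^ (Fintype.card ι - 2) + 1) ≤ bm * δ ^ (Fintype.card ι - 1)) :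
    bm * δ ^ (Fintype.card ι - 1) / 2 ≤ |(secularPoly D b r).eval x| := by
  obtain ⟨hx₁, hx₂⟩ := abs_le.1 hx
  have hbound := sub_mul_le_abs_eval_secularPoly (M := M) (x := x) j hD hbm hbm_le hB hgap hδ
    (fun k => abs_le.2 ⟨by linarith [hr k, hr j], by linarith [hr k, hr j]⟩)
    (fun k => abs_le.2 ⟨by linarith [hr k, hr j], by linarith [hr k, hr j]⟩)
  set n := Fintype.card ι
  have hbmB : bm ≤ B := (hbm_le j).trans (hB j)
  have hB₀ : 0 ≤ B := hbm.trans hbmB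
  have hM : 0 ≤ M := by linarith [hr j]
  have hn : ((n - 1 : ℕ) : ℝ) ≤ n := Nat.cast_le.2 (Nat.sub_le n 1)
  have hcoef : bm * (n - 1 : ℕ) * M ^ (n - 2) + D * M ^ (n - 1) + (n - 1 : ℕ) * B * M ^ (n - 2)
      ≤ (4 * D * M ^ (n - 1) + 4 * n * B * M ^ (n - 2) + 1) / 2 := by
    have h₁ : bm * (n - 1 : ℕ) ≤ B * n := mul_le_mul hbmB hn (Nat.cast_nonneg _) hB₀
    have h₂ : ((n - 1 : ℕ) : ℝ) * B ≤ n * B := mul_le_mul_of_nonneg_right hn hB₀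
    have hMpow : 0 ≤ M ^ (n - 2) := by positivity
    have : 0 ≤ D * M ^ (n - 1) := by positivity
    linarith [mul_le_mul_of_nonneg_right h₁ hMpow, mul_le_mul_of_nonneg_right h₂ hMpow]
  have := mul_le_mul hx hcoef (by positivity) ((abs_nonneg _).trans hx)
  linarith

end SecularPoly

section Interlacing

variable {n : ℕ} {D : ℝ} {b r : Fin n → ℝ}

lemma neg_one_pow_mul_eval_secularPoly_neg_lt_zero (hb : ∀ i, 0 < b i) (hr : StrictMono r)
    (m : Fin n) :
    (-1) ^ (m : ℕ) * (secularPoly D b r).eval (-r m) < 0 := by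
  rw [eval_secularPoly_neg, mul_neg, neg_lt_zero, mul_left_comm]
  exact mul_pos (hb m) (neg_one_pow_mul_prod_erase_sub_pos hr m)

lemma exists_eval_secularPoly_eq_zero (hD : 0 < D) (hb : ∀ i, 0 < b i) (hr₀ : ∀ k, 0 ≤ r k)
    (hr : StrictMono r) (m : Fin n) :
    ∃ x, (secularPoly D b r).eval x = 0 ∧ -r m < x ∧ ∀ k < m, x < -r k := by
  have hsign := neg_one_pow_mul_eval_secularPoly_neg_lt_zero (D := D) hb hr
  rcases Nat.eq_zero_or_pos m with hm | hm
  · set x₀ := (∑ i, b i) / D + 1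
    have hx₀ : 0 < x₀ := by have := sum_nonneg fun i (_ : i ∈ univ) => (hb i).le; positivity
    have hpos : 0 < (secularPoly D b r).eval x₀ :=
      eval_secularPoly_pos hx₀ hr₀ (fun i => (hb i).le)
        (by rw [mul_add, mul_div_cancel₀ _ hD.ne']; linarith)
    have hneg : (secularPoly D b r).eval (-r m) < 0 := by simpa [hm] using hsign m
    obtain ⟨x, hx, hroot⟩ := exists_eq_zero_of_mul_neg (by linarith [hr₀ m])
      (secularPoly D b r).continuous.continuousOn (mul_neg_of_neg_of_pos hneg hpos)
    exact ⟨x, hroot, hx.1, fun k hk => absurd hk (by simp [Fin.lt_def, hm])⟩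
  · set k : Fin n := ⟨m - 1, by omega⟩
    have hkm : k < m := Fin.lt_def.2 (show (m : ℕ) - 1 < m by omega)
    have hpow : (-1 : ℝ) ^ (m : ℕ) = -(-1) ^ (k : ℕ) := by
      rw [show (m : ℕ) = k + 1 from (Nat.sub_add_cancel hm).symm, pow_succ, mul_neg_one]
    have hsq : ((-1 : ℝ) ^ (k : ℕ)) ^ 2 = 1 := by rw [← pow_mul, mul_comm, pow_mul]; norm_num
    have hchange : (secularPoly D b r).eval (-r m) * (secularPoly D b r).eval (-r k) < 0 := by
      have := mul_pos_of_neg_of_neg (hsign m) (hsign k)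
      rw [hpow] at this
      linear_combination this - ((secularPoly D b r).eval (-r m) *
        (secularPoly D b r).eval (-r k)) * hsq
    obtain ⟨x, hx, hroot⟩ := exists_eq_zero_of_mul_neg (by linarith [hr hkm])
      (secularPoly D b r).continuous.continuousOn hchange
    refine ⟨x, hroot, hx.1, fun k' hk' => hx.2.trans_le (neg_le_neg (hr.monotone ?_))⟩
    exact Fin.le_def.2 (show (k' : ℕ) ≤ m - 1 by omega)

lemma secularPoly_roots_interlace (hD : 0 < D) (hb : ∀ i, 0 < b i) (hr₀ : ∀ k, 0 ≤ r k)
    (hr : StrictMono r) {a : Fin n → ℝ} (ha : StrictAnti a)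
    (ha_roots : ∀ x, (secularPoly D b r).eval x = 0 → ∃ j, x = a j) (m : Fin n) :
    -r m < a m ∧ ∀ k < m, a m < -r k := by
  choose ρ hρ_root hρ_lo hρ_hi using exists_eval_secularPoly_eq_zero hD hb hr₀ hr
  have hρ : StrictAnti ρ := fun m₁ m₂ h => (hρ_hi m₂ m₁ h).trans (hρ_lo m₁)
  obtain rfl : ρ = a := hρ.eq_of_forall_mem_range ha fun m => by
    obtain ⟨j, hj⟩ := ha_roots _ (hρ_root m)
    exact ⟨j, hj.symm⟩
  exact ⟨hρ_lo m, hρ_hi m⟩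

lemma two_mul_le_abs_sub_of_secularPoly_roots (hD : 0 < D) (hb : ∀ i, 0 < b i)
    (hr₀ : ∀ k, 0 ≤ r k) (hr : StrictMono r) {a : Fin n → ℝ} (ha : StrictAnti a)
    (ha_roots : ∀ x, (secularPoly D b r).eval x = 0 ↔ ∃ j, x = a j) {c μ : ℝ} (hc : 0 < c)
    (hμ : 0 ≤ μ)
    (hnear : ∀ j, ∀ x ∈ Set.Icc (-r j - μ) (-r j + μ), c ≤ |(secularPoly D b r).eval x|)
    {i j : Fin n} (hij : i < j) : 2 * μ ≤ |a i - a j| := by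
  have hfar : ∀ k, a k ∉ Set.Icc (-r i - μ) (-r i + μ) := fun k hk => by
    have := hnear i _ hk
    rw [(ha_roots _).2 ⟨k, rfl⟩, abs_zero] at this
    linarith
  have hinterlace := secularPoly_roots_interlace hD hb hr₀ hr ha fun x hx => (ha_roots x).1 hx
  have hi := (hinterlace i).1
  have hj := (hinterlace j).2 i hij
  simp only [Set.mem_Icc, not_and_or, not_le] at hfar
  rcases hfar i with hi' | hi' <;> rcases hfar j with hj' | hj' <;>
    linarith [le_abs_self (a i - a j)]

end Interlacing

/-- With `bm := min b_i`, `B := max b_i`, `rm := min (r_{i+1} - r_i)` and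
`μ := min { bm·rm^(N-1) / (4D(2r_N)^(N-1) + 4NB(2r_N)^(N-2) + 1), rm/4, r_1/4 }`, one has
`|P_N(λ)| ≥ bm·rm^(N-1)/2 > 0` for every `λ` in the union of the intervals
`[-r_j - μ, -r_j + μ]`; consequently, if `a_1 > ⋯ > a_N` are the `N` real roots of `P_N`,
then `|a_i - a_j| ≥ 2μ` for all `i < j`. -/
theorem stmt_13 (N : ℕ) (hN : 2 ≤ N) (r b : Fin N → ℝ)
    (hr : ∀ i, 0 < r i) (hrmono : StrictMono r) (hb : ∀ i, 0 < b i)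
    (D : ℝ) (hD : 0 < D)
    (P : Polynomial ℝ)
    (hP : P = C D * ∏ j, (X + C (r j)) -
      ∑ i, C (b i) * ∏ j ∈ Finset.univ.erase i, (X + C (r j)))
    (a : Fin N → ℝ) (haanti : StrictAnti a)
    (haroots : ∀ x : ℝ, P.eval x = 0 ↔ ∃ j, x = a j)
    (bm B rm μ : ℝ)
    (hbm : bm = Finset.univ.inf' ⟨⟨0, by omega⟩, Finset.mem_univ _⟩ b)
    (hB : B = Finset.univ.sup' ⟨⟨0, by omega⟩, Finset.mem_univ _⟩ b)
    (hrm_le : ∀ i : Fin N, ∀ h : (i : ℕ) + 1 < N, rm ≤ r ⟨(i : ℕ) + 1, h⟩ - r i)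
    (hrm_mem : ∃ i : Fin N, ∃ h : (i : ℕ) + 1 < N, rm = r ⟨(i : ℕ) + 1, h⟩ - r i)
    (hμ : μ = min (min
      (bm * rm ^ (N - 1) /
        (4 * D * (2 * r ⟨N - 1, by omega⟩) ^ (N - 1) +
          4 * (N : ℝ) * B * (2 * r ⟨N - 1, by omega⟩) ^ (N - 2) + 1))
      (rm / 4)) (r ⟨0, by omega⟩ / 4)) :
    0 < bm * rm ^ (N - 1) / 2 ∧
    (∀ j : Fin N, ∀ x : ℝ, x ∈ Set.Icc (-(r j) - μ) (-(r j) + μ) →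
      bm * rm ^ (N - 1) / 2 ≤ |P.eval x|) ∧
    (∀ i j : Fin N, i < j → 2 * μ ≤ |a i - a j|) := by
  obtain rfl : P = secularPoly D b r := hP
  set M := 2 * r ⟨N - 1, by omega⟩
  have hr_bounds : ∀ k, r ⟨0, by omega⟩ ≤ r k ∧ 2 * r k ≤ M := fun k =>
    ⟨hrmono.monotone (Fin.le_def.2 (Nat.zero_le _)), by
      linarith [hrmono.monotone (show k ≤ ⟨N - 1, by omega⟩ from
        Fin.le_def.2 (Nat.le_sub_one_of_lt k.isLt))]⟩
  have hM : 0 < M := by linarith [(hr_bounds ⟨0, by omega⟩).2, hr ⟨0, by omega⟩]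
  have hrm : 0 < rm := by
    obtain ⟨i, h, rfl⟩ := hrm_mem
    exact sub_pos.2 (hrmono (Fin.lt_def.2 (Nat.lt_succ_self _)))
  have hbm_le : ∀ i, bm ≤ b i := fun i => hbm ▸ inf'_le b (mem_univ i)
  have hbm_pos : 0 < bm := by
    obtain ⟨i, -, hi⟩ := exists_mem_eq_inf' ⟨⟨0, by omega⟩, mem_univ _⟩ b
    exact hbm ▸ hi ▸ hb i
  have hB_le : ∀ i, b i ≤ B := fun i => hB ▸ le_sup' b (mem_univ i)
  have hB_pos : 0 < B := hbm_pos.trans_le ((hbm_le _).trans (hB_le ⟨0, by omega⟩))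
  have hμ_pos : 0 < μ :=
    hμ ▸ lt_min (lt_min (by positivity) (by positivity)) (by linarith [hr ⟨0, by omega⟩])
  have hμQ : μ * (4 * D * M ^ (N - 1) + 4 * N * B * M ^ (N - 2) + 1) ≤ bm * rm ^ (N - 1) := by
    rw [← le_div_iff₀ (by positivity)]
    exact hμ ▸ (min_le_left _ _).trans (min_le_left _ _)
  have hμr₀ : μ ≤ r ⟨0, by omega⟩ / 4 := hμ ▸ min_le_right _ _
  have hnear : ∀ j : Fin N, ∀ x ∈ Set.Icc (-(r j) - μ) (-(r j) + μ),
      bm * rm ^ (N - 1) / 2 ≤ |(secularPoly D b r).eval x| := by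
    rintro j x ⟨hx₁, hx₂⟩
    simpa using le_abs_eval_secularPoly (μ := μ) (x := x) j hD.le hbm_pos.le hbm_le hB_le
      (fun k hkj => le_abs_sub_of_forall_le_succ_sub hrmono.monotone hrm_le hkj) hrm.le
      (fun k => ⟨by linarith [hr_bounds k], (hr_bounds k).2⟩)
      (abs_le.2 ⟨by linarith, by linarith⟩) (by simpa using hμQ)
  exact ⟨by positivity, hnear, fun i j hij => two_mul_le_abs_sub_of_secularPoly_roots hD hb
    (fun k => (hr k).le) hrmono haanti haroots (by positivity) hμ_pos.le hnear hij⟩
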